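/- arXiv:2510.26326 — 7 statements merged into one kernel-verified Lean document; each statement's English description precedes it below -/
import Mathlib

section
/- For −1 ≤ α, β ≤ 1 with z₋ = min(α,β), z₊ = max(α,β), the 4×4 matrix Π(α,β) = (1/2)·[[1+z₋, 0, 0, s],[0, max(β−α,0), 0, 0],[0, 0, max(α−β,0), 0],[s, 0, 0, 1−z₊]] with s = √((1+z₋)(1−z₊)) is positive semidefinite, has trace 1, and its partial traces are: tr over the second tensor factor equals diag((1+β)/2,(1−β)/2) and tr over the first tensor factor equals diag((1+α)/2,(1−α)/2). -/
open Matrix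
open scoped ComplexOrder

noncomputable section

/-- Partial trace over the second tensor factor of `M₄(ℂ) ≅ M₂(ℂ) ⊗ M₂(ℂ)`
(index ordering `(i,k) ↦ 2*i + k`). -/
def ptrace2 (A : Matrix (Fin 4) (Fin 4) ℂ) : Matrix (Fin 2) (Fin 2) ℂ :=
  !![A 0 0 + A 1 1, A 0 2 + A 1 3; A 2 0 + A 3 1, A 2 2 + A 3 3]

/-- Partial trace over the first tensor factor. -/
def ptrace1 (A : Matrix (Fin 4) (Fin 4) ℂ) : Matrix (Fin 2) (Fin 2) ℂ :=
  !![A 0 0 + A 2 2, A 0 1 + A 2 3; A 1 0 + A 3 2, A 1 1 + A 3 3]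

/-- Kronecker product `M₂(ℂ) × M₂(ℂ) → M₄(ℂ)` with index ordering `(i,k) ↦ 2*i + k`. -/
def kron (A B : Matrix (Fin 2) (Fin 2) ℂ) : Matrix (Fin 4) (Fin 4) ℂ :=
  !![A 0 0 * B 0 0, A 0 0 * B 0 1, A 0 1 * B 0 0, A 0 1 * B 0 1;
     A 0 0 * B 1 0, A 0 0 * B 1 1, A 0 1 * B 1 0, A 0 1 * B 1 1;
     A 1 0 * B 0 0, A 1 0 * B 0 1, A 1 1 * B 0 0, A 1 1 * B 0 1;
     A 1 0 * B 1 0, A 1 0 * B 1 1, A 1 1 * B 1 0, A 1 1 * B 1 1]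

def σx : Matrix (Fin 2) (Fin 2) ℂ := !![0, 1; 1, 0]
def σy : Matrix (Fin 2) (Fin 2) ℂ := !![0, -Complex.I; Complex.I, 0]
def σz : Matrix (Fin 2) (Fin 2) ℂ := !![1, 0; 0, -1]

/-- The symmetric cost operator `C_{symm,p}`. -/
def Csymm (p : ℝ) : Matrix (Fin 4) (Fin 4) ℂ :=
  !![(((2:ℝ)^p : ℝ) : ℂ), 0, 0, -(((2:ℝ)^p : ℝ) : ℂ);
     0, (((2:ℝ)^(p+1) : ℝ) : ℂ), 0, 0;
     0, 0, (((2:ℝ)^(p+1) : ℝ) : ℂ), 0;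
     -(((2:ℝ)^p : ℝ) : ℂ), 0, 0, (((2:ℝ)^p : ℝ) : ℂ)]

/-- The single-observable cost operator `C_{z,p} = diag(0, 2^p, 2^p, 0)`. -/
def Cz (p : ℝ) : Matrix (Fin 4) (Fin 4) ℂ :=
  !![0, 0, 0, 0;
     0, (((2:ℝ)^p : ℝ) : ℂ), 0, 0;
     0, 0, (((2:ℝ)^p : ℝ) : ℂ), 0;
     0, 0, 0, 0]


set_option maxHeartbeats 1600000 in
theorem aux_coupling (a c m₁ m₂ : ℝ) (ha : 0 ≤ a) (hc : 0 ≤ c) (h₁ : 0 ≤ m₁) (h₂ : 0 ≤ m₂)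
    (P : Matrix (Fin 4) (Fin 4) ℂ)
    (hP : P = (1/2 : ℂ) •
      !![((a:ℝ):ℂ), 0, 0, ((Real.sqrt (a*c) : ℝ):ℂ);
         0, ((m₁:ℝ):ℂ), 0, 0;
         0, 0, ((m₂:ℝ):ℂ), 0;
         ((Real.sqrt (a*c) : ℝ):ℂ), 0, 0, ((c:ℝ):ℂ)]) :
    P.PosSemidef ∧ P.trace = (((a+m₁+m₂+c)/2 : ℝ):ℂ) ∧
    ptrace2 P = !![(((a+m₁)/2 : ℝ):ℂ), 0; 0, (((m₂+c)/2 : ℝ):ℂ)] ∧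
    ptrace1 P = !![(((a+m₂)/2 : ℝ):ℂ), 0; 0, (((m₁+c)/2 : ℝ):ℂ)] := by
  have h2c : ((Real.sqrt 2 : ℝ):ℂ) * ((Real.sqrt 2 : ℝ):ℂ) = 2 := by
    rw [← Complex.ofReal_mul, Real.mul_self_sqrt (by norm_num)]; norm_num
  have haC : ((Real.sqrt a : ℝ):ℂ) * ((Real.sqrt a : ℝ):ℂ) = (a:ℂ) := by
    rw [← Complex.ofReal_mul, Real.mul_self_sqrt ha]
  have hcC : ((Real.sqrt c : ℝ):ℂ) * ((Real.sqrt c : ℝ):ℂ) = (c:ℂ) := by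
    rw [← Complex.ofReal_mul, Real.mul_self_sqrt hc]
  have hm1C : ((Real.sqrt m₁ : ℝ):ℂ) * ((Real.sqrt m₁ : ℝ):ℂ) = (m₁:ℂ) := by
    rw [← Complex.ofReal_mul, Real.mul_self_sqrt h₁]
  have hm2C : ((Real.sqrt m₂ : ℝ):ℂ) * ((Real.sqrt m₂ : ℝ):ℂ) = (m₂:ℂ) := by
    rw [← Complex.ofReal_mul, Real.mul_self_sqrt h₂]
  have hacC : ((Real.sqrt a : ℝ):ℂ) * ((Real.sqrt c : ℝ):ℂ) = ((Real.sqrt (a*c) : ℝ):ℂ) := by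
    rw [← Complex.ofReal_mul, ← Real.sqrt_mul ha]
  have hcaC : ((Real.sqrt c : ℝ):ℂ) * ((Real.sqrt a : ℝ):ℂ) = ((Real.sqrt (a*c) : ℝ):ℂ) := by
    rw [mul_comm]; exact hacC
  have hPB : P = (!![((Real.sqrt (a/2) : ℝ):ℂ), 0, 0, ((Real.sqrt (c/2) : ℝ):ℂ);
       0, ((Real.sqrt (m₁/2) : ℝ):ℂ), 0, 0;
       0, 0, ((Real.sqrt (m₂/2) : ℝ):ℂ), 0;
       0, 0, 0, 0])ᴴ * (!![((Real.sqrt (a/2) : ℝ):ℂ), 0, 0, ((Real.sqrt (c/2) : ℝ):ℂ);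
       0, ((Real.sqrt (m₁/2) : ℝ):ℂ), 0, 0;
       0, 0, ((Real.sqrt (m₂/2) : ℝ):ℂ), 0;
       0, 0, 0, 0]) := by
    rw [hP]
    ext i j
    fin_cases i <;> fin_cases j <;>
      simp [Matrix.mul_apply, Fin.sum_univ_four, Matrix.vecHead, Matrix.vecTail] <;>
      · rw [div_mul_div_comm, h2c]
        first
          | (rw [haC]; ring)
          | (rw [hcC]; ring)
          | (rw [hm1C]; ring)
          | (rw [hm2C]; ring)
          | (rw [hacC]; ring)
          | (rw [hcaC]; ring)
  refine ⟨hPB ▸ posSemidef_conjTranspose_mul_self _, ?_, ?_, ?_⟩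
  · rw [hP]
    simp [Matrix.trace, Matrix.diag, Fin.sum_univ_four, Matrix.vecHead, Matrix.vecTail]
    push_cast
    ring
  · rw [hP]
    ext i j
    fin_cases i <;> fin_cases j <;>
      simp [ptrace2, Matrix.vecHead, Matrix.vecTail] <;> push_cast <;> ring
  · rw [hP]
    ext i j
    fin_cases i <;> fin_cases j <;>
      simp [ptrace1, Matrix.vecHead, Matrix.vecTail] <;> push_cast <;> ring

/-- the explicit matrix `Π(α,β)` is a coupling of the commuting states
`ρ(α) = diag((1+α)/2,(1−α)/2)` and `ρ(β)`. -/
theorem stmt_2 (α β : ℝ) (hα₁ : -1 ≤ α) (hα₂ : α ≤ 1) (hβ₁ : -1 ≤ β) (hβ₂ : β ≤ 1)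
    (P : Matrix (Fin 4) (Fin 4) ℂ)
    (hP : P = (1/2 : ℂ) •
      !![((1 + min α β : ℝ) : ℂ), 0, 0, ((Real.sqrt ((1 + min α β) * (1 - max α β)) : ℝ) : ℂ);
         0, ((max (β - α) 0 : ℝ) : ℂ), 0, 0;
         0, 0, ((max (α - β) 0 : ℝ) : ℂ), 0;
         ((Real.sqrt ((1 + min α β) * (1 - max α β)) : ℝ) : ℂ), 0, 0, ((1 - max α β : ℝ) : ℂ)]) :
    P.PosSemidef ∧ P.trace = 1 ∧
    ptrace2 P = !![(((1 + β)/2 : ℝ) : ℂ), 0; 0, (((1 - β)/2 : ℝ) : ℂ)] ∧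
    ptrace1 P = !![(((1 + α)/2 : ℝ) : ℂ), 0; 0, (((1 - α)/2 : ℝ) : ℂ)] := by

  obtain ⟨h1, h2, h3, h4⟩ := aux_coupling (1 + min α β) (1 - max α β)
    (max (β - α) 0) (max (α - β) 0)
    (by rcases le_total α β with h | h
        · rw [min_eq_left h]; linarith
        · rw [min_eq_right h]; linarith)
    (by rcases le_total α β with h | h
        · rw [max_eq_right h]; linarith
        · rw [max_eq_left h]; linarith)
    (le_max_right _ _) (le_max_right _ _) P hP
  have e1 : (1 + min α β + max (β - α) 0 + max (α - β) 0 + (1 - max α β)) / 2 = (1:ℝ) := by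
    rcases le_total α β with h | h
    · rw [min_eq_left h, max_eq_right h, max_eq_left (by linarith : (0:ℝ) ≤ β - α),
        max_eq_right (by linarith : α - β ≤ (0:ℝ))]; ring
    · rw [min_eq_right h, max_eq_left h, max_eq_right (by linarith : β - α ≤ (0:ℝ)),
        max_eq_left (by linarith : (0:ℝ) ≤ α - β)]; ring
  have e2 : (1 + min α β + max (β - α) 0) / 2 = (1 + β) / 2 := by
    rcases le_total α β with h | h
    · rw [min_eq_left h, max_eq_left (by linarith : (0:ℝ) ≤ β - α)]; ring
    · rw [min_eq_right h, max_eq_right (by linarith : β - α ≤ (0:ℝ))]; ring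
  have e3 : (max (α - β) 0 + (1 - max α β)) / 2 = (1 - β) / 2 := by
    rcases le_total α β with h | h
    · rw [max_eq_right h, max_eq_right (by linarith : α - β ≤ (0:ℝ))]; ring
    · rw [max_eq_left h, max_eq_left (by linarith : (0:ℝ) ≤ α - β)]; ring
  have e4 : (1 + min α β + max (α - β) 0) / 2 = (1 + α) / 2 := by
    rcases le_total α β with h | h
    · rw [min_eq_left h, max_eq_right (by linarith : α - β ≤ (0:ℝ))]; ring
    · rw [min_eq_right h, max_eq_left (by linarith : (0:ℝ) ≤ α - β)]; ring
  have e5 : (max (β - α) 0 + (1 - max α β)) / 2 = (1 - α) / 2 := by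
    rcases le_total α β with h | h
    · rw [max_eq_right h, max_eq_left (by linarith : (0:ℝ) ≤ β - α)]; ring
    · rw [max_eq_left h, max_eq_right (by linarith : β - α ≤ (0:ℝ))]; ring
  refine ⟨h1, ?_, ?_, ?_⟩
  · rw [h2, e1]; norm_num
  · rw [h3, e2, e3]
  · rw [h4, e4, e5]
end
end

section
/- For p ≥ 1 and −1 ≤ α,β ≤ 1, the minimum of tr(C_{symm,p} Π) over all positive semidefinite Π ∈ M₄(ℂ) with trace 1 whose partial trace over the first tensor factor is diag((1+α)/2,(1−α)/2) and whose partial trace over the second tensor factor is diag((1+β)/2,(1−β)/2), equals 2^p (1 + |α−β|/2 − √((1+min(α,β))(1−max(α,β)))). Here C_{symm,p} = [[2^p,0,0,−2^p],[0,2^{p+1},0,0],[0,0,2^{p+1},0],[−2^p,0,0,2^p]]. -/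
/-!
Only the diagonal of `Π` and the real part of its corner entry `Π₀₃` enter `tr(C_{symm,p} Π)`,
which equals `2^p (Π₀₀ + Π₃₃ - 2 Re Π₀₃ + 2 (Π₁₁ + Π₂₂))`. For the lower bound, positivity of the
`{0, 3}` principal minor gives `(Re Π₀₃)² ≤ Π₀₀ Π₃₃`, and the marginal constraints force
`Π₀₀ ≤ (1 + min α β)/2`, `Π₃₃ ≤ (1 - max α β)/2` and `Π₁₁ + Π₂₂ ≥ |α - β|/2`. The `X`-shaped matrix
with diagonal `((1 + min)/2, (max - α)/2, (max - β)/2, (1 - max)/2)` and corner entries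
`√(Π₀₀ Π₃₃)` is a coupling attaining all three bounds at once.
-/

open Matrix
open scoped ComplexOrder

noncomputable section

lemma Matrix.IsHermitian.im_apply_self {n : Type*} {P : Matrix n n ℂ} (hP : P.IsHermitian)
    (i : n) : (P i i).im = 0 := by
  have h := congrArg Complex.im (hP.apply i i)
  simp only [Complex.star_def, Complex.conj_im] at h
  linarith

namespace Matrix.PosSemidef

variable {n : Type*} {P : Matrix n n ℂ}

lemma re_apply_self_nonneg (hP : P.PosSemidef) (i : n) : 0 ≤ (P i i).re :=
  (Complex.le_def.mp hP.diag_nonneg).1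

lemma re_apply_sq_le [Fintype n] (hP : P.PosSemidef) (i j : n) :
    (P i j).re ^ 2 ≤ (P i i).re * (P j j).re := by
  have hdet := (Complex.le_def.mp (hP.submatrix ![i, j]).det_nonneg).1
  rw [det_fin_two] at hdet
  simp only [submatrix_apply, Matrix.cons_val_zero, Matrix.cons_val_one] at hdet
  rw [← hP.1.apply j i] at hdet
  simp only [Complex.sub_re, Complex.mul_re, Complex.star_def, Complex.conj_re, Complex.conj_im,
    hP.1.im_apply_self, Complex.zero_re] at hdet
  nlinarith [sq_nonneg (P i j).im]

end Matrix.PosSemidef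

lemma trace_Csymm_mul (p : ℝ) {P : Matrix (Fin 4) (Fin 4) ℂ} (hP : P.IsHermitian) :
    (Csymm p * P).trace = ((2 ^ p * ((P 0 0).re + (P 3 3).re - 2 * (P 0 3).re
      + 2 * ((P 1 1).re + (P 2 2).re)) : ℝ) : ℂ) := by
  have h30 : P 3 0 = star (P 0 3) := (hP.apply 3 0).symm
  apply Complex.ext
  all_goals simp [Csymm, trace, diag, mul_apply, Fin.sum_univ_four, h30, hP.im_apply_self,
    Real.rpow_add_one]
  ring

/-- The state `ρ(a)`. -/
def qubitState (a : ℝ) : Matrix (Fin 2) (Fin 2) ℂ :=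
  !![(((1 + a) / 2 : ℝ) : ℂ), 0; 0, (((1 - a) / 2 : ℝ) : ℂ)]

def optimalCost (α β : ℝ) : ℝ :=
  1 + |α - β| / 2 - √((1 + min α β) * (1 - max α β))

lemma re_apply_of_ptrace1_eq {P : Matrix (Fin 4) (Fin 4) ℂ} {a : ℝ}
    (h : ptrace1 P = qubitState a) :
    (P 0 0).re + (P 2 2).re = (1 + a) / 2 ∧ (P 1 1).re + (P 3 3).re = (1 - a) / 2 := by
  constructor
  · simpa [ptrace1, qubitState] using congrArg Complex.re (congrFun₂ h 0 0)
  · simpa [ptrace1, qubitState] using congrArg Complex.re (congrFun₂ h 1 1)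

lemma re_apply_of_ptrace2_eq {P : Matrix (Fin 4) (Fin 4) ℂ} {a : ℝ}
    (h : ptrace2 P = qubitState a) :
    (P 0 0).re + (P 1 1).re = (1 + a) / 2 ∧ (P 2 2).re + (P 3 3).re = (1 - a) / 2 := by
  constructor
  · simpa [ptrace2, qubitState] using congrArg Complex.re (congrFun₂ h 0 0)
  · simpa [ptrace2, qubitState] using congrArg Complex.re (congrFun₂ h 1 1)

lemma optimalCost_le {α β u v w₁ w₂ r : ℝ} (hu : 0 ≤ u) (hv : 0 ≤ v) (hw₁ : 0 ≤ w₁)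
    (hw₂ : 0 ≤ w₂) (h₁ : u + w₂ = (1 + α) / 2) (h₂ : w₁ + v = (1 - α) / 2)
    (h₃ : u + w₁ = (1 + β) / 2) (hr : r ^ 2 ≤ u * v) :
    optimalCost α β ≤ u + v - 2 * r + 2 * (w₁ + w₂) := by
  have hu' : u ≤ (1 + min α β) / 2 := by
    rcases min_cases α β with ⟨h, -⟩ | ⟨h, -⟩ <;> rw [h] <;> linarith
  have hv' : v ≤ (1 - max α β) / 2 := by
    rcases max_cases α β with ⟨h, -⟩ | ⟨h, -⟩ <;> rw [h] <;> linarith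
  have hr' : 2 * r ≤ √((1 + min α β) * (1 - max α β)) := by
    refine (le_abs_self _).trans (Real.abs_le_sqrt ?_)
    nlinarith [mul_le_mul hu' hv' hv (hu.trans hu')]
  have hw : |α - β| ≤ 2 * (w₁ + w₂) := abs_le.mpr ⟨by linarith, by linarith⟩
  unfold optimalCost
  linarith

lemma optimalCost_le_re_trace (p : ℝ) {α β : ℝ} {P : Matrix (Fin 4) (Fin 4) ℂ}
    (hP : P.PosSemidef) (h₁ : ptrace1 P = qubitState α) (h₂ : ptrace2 P = qubitState β) :
    2 ^ p * optimalCost α β ≤ ((Csymm p * P).trace).re := by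
  obtain ⟨m₁, m₂⟩ := re_apply_of_ptrace1_eq h₁
  obtain ⟨m₃, -⟩ := re_apply_of_ptrace2_eq h₂
  rw [trace_Csymm_mul p hP.1, Complex.ofReal_re]
  gcongr
  exact optimalCost_le (hP.re_apply_self_nonneg 0) (hP.re_apply_self_nonneg 3)
    (hP.re_apply_self_nonneg 1) (hP.re_apply_self_nonneg 2) m₁ m₂ m₃ (hP.re_apply_sq_le 0 3)

section xState

variable {d₀ d₁ d₂ d₃ : ℝ}

def xState (d₀ d₁ d₂ d₃ : ℝ) : Matrix (Fin 4) (Fin 4) ℂ :=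
  !![(d₀ : ℂ), 0, 0, (√(d₀ * d₃) : ℂ);
     0, (d₁ : ℂ), 0, 0;
     0, 0, (d₂ : ℂ), 0;
     (√(d₀ * d₃) : ℂ), 0, 0, (d₃ : ℂ)]

lemma posSemidef_xState (h₀ : 0 ≤ d₀) (h₁ : 0 ≤ d₁) (h₂ : 0 ≤ d₂) (h₃ : 0 ≤ d₃) :
    (xState d₀ d₁ d₂ d₃).PosSemidef := by
  have e₀ : (√d₀ : ℂ) * √d₀ = d₀ := by rw [← Complex.ofReal_mul, Real.mul_self_sqrt h₀]
  have e₃ : (√d₃ : ℂ) * √d₃ = d₃ := by rw [← Complex.ofReal_mul, Real.mul_self_sqrt h₃]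
  have hdecomp : xState d₀ d₁ d₂ d₃ = vecMulVec ![(√d₀ : ℂ), 0, 0, (√d₃ : ℂ)]
      (star ![(√d₀ : ℂ), 0, 0, (√d₃ : ℂ)]) + diagonal ![0, (d₁ : ℂ), d₂, 0] := by
    ext i j
    simp only [Matrix.add_apply, vecMulVec_apply]
    fin_cases i <;> fin_cases j <;> simp [xState, Real.sqrt_mul h₀, e₀, e₃, mul_comm]
  rw [hdecomp]
  refine (posSemidef_vecMulVec_self_star _).add (posSemidef_diagonal_iff.mpr fun i => ?_)
  fin_cases i <;> simp [h₁, h₂]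

lemma trace_xState : (xState d₀ d₁ d₂ d₃).trace = ((d₀ + d₁ + d₂ + d₃ : ℝ) : ℂ) := by
  simp [xState, trace, Fin.sum_univ_four]

lemma ptrace1_xState {a : ℝ} (h₁ : d₀ + d₂ = (1 + a) / 2) (h₂ : d₁ + d₃ = (1 - a) / 2) :
    ptrace1 (xState d₀ d₁ d₂ d₃) = qubitState a := by
  rw [qubitState, ← h₁, ← h₂]
  ext i j
  fin_cases i <;> fin_cases j <;> simp [ptrace1, xState]

lemma ptrace2_xState {a : ℝ} (h₁ : d₀ + d₁ = (1 + a) / 2) (h₂ : d₂ + d₃ = (1 - a) / 2) :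
    ptrace2 (xState d₀ d₁ d₂ d₃) = qubitState a := by
  rw [qubitState, ← h₁, ← h₂]
  ext i j
  fin_cases i <;> fin_cases j <;> simp [ptrace2, xState]

lemma trace_Csymm_mul_xState (p : ℝ) :
    (Csymm p * xState d₀ d₁ d₂ d₃).trace
      = ((2 ^ p * (d₀ + d₃ - 2 * √(d₀ * d₃) + 2 * (d₁ + d₂)) : ℝ) : ℂ) := by
  have hHerm : (xState d₀ d₁ d₂ d₃).IsHermitian := by
    refine IsHermitian.ext fun i j => ?_
    fin_cases i <;> fin_cases j <;> simp [xState]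
  rw [trace_Csymm_mul p hHerm]
  simp [xState]

end xState

def optimalCoupling (α β : ℝ) : Matrix (Fin 4) (Fin 4) ℂ :=
  xState ((1 + min α β) / 2) ((max α β - α) / 2) ((max α β - β) / 2) ((1 - max α β) / 2)

lemma posSemidef_optimalCoupling {α β : ℝ} (hα₁ : -1 ≤ α) (hα₂ : α ≤ 1) (hβ₁ : -1 ≤ β)
    (hβ₂ : β ≤ 1) : (optimalCoupling α β).PosSemidef :=
  posSemidef_xState (by linarith [le_min hα₁ hβ₁]) (by linarith [le_max_left α β])
    (by linarith [le_max_right α β]) (by linarith [max_le hα₂ hβ₂])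

section optimalCoupling

variable (α β : ℝ)

lemma trace_optimalCoupling : (optimalCoupling α β).trace = 1 := by
  rw [optimalCoupling, trace_xState, ← Complex.ofReal_one]
  congr 1
  linarith [min_add_max α β]

lemma ptrace1_optimalCoupling : ptrace1 (optimalCoupling α β) = qubitState α :=
  ptrace1_xState (by linarith [min_add_max α β]) (by ring)

lemma ptrace2_optimalCoupling : ptrace2 (optimalCoupling α β) = qubitState β :=
  ptrace2_xState (by linarith [min_add_max α β]) (by ring)

lemma trace_Csymm_mul_optimalCoupling (p : ℝ) :
    (Csymm p * optimalCoupling α β).trace = ((2 ^ p * optimalCost α β : ℝ) : ℂ) := by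
  have hsqrt : 2 * √((1 + min α β) / 2 * ((1 - max α β) / 2))
      = √((1 + min α β) * (1 - max α β)) := by
    rw [show (1 + min α β) / 2 * ((1 - max α β) / 2) = (1 + min α β) * (1 - max α β) / 2 ^ 2
      by ring, Real.sqrt_div' _ (by positivity), Real.sqrt_sq two_pos.le]
    ring
  rw [optimalCoupling, trace_Csymm_mul_xState, optimalCost, ← max_sub_min_eq_abs', ← hsqrt]
  congr 2
  linarith [min_add_max α β]

end optimalCoupling

theorem stmt_4_general (p : ℝ) (α β : ℝ) (hα₁ : -1 ≤ α) (hα₂ : α ≤ 1)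
    (hβ₁ : -1 ≤ β) (hβ₂ : β ≤ 1) :
    IsLeast {x : ℝ | ∃ P : Matrix (Fin 4) (Fin 4) ℂ, P.PosSemidef ∧ P.trace = 1 ∧
        ptrace1 P = !![(((1 + α)/2 : ℝ) : ℂ), 0; 0, (((1 - α)/2 : ℝ) : ℂ)] ∧
        ptrace2 P = !![(((1 + β)/2 : ℝ) : ℂ), 0; 0, (((1 - β)/2 : ℝ) : ℂ)] ∧
        (Csymm p * P).trace = (x : ℂ)}
      ((2:ℝ)^p * (1 + |α - β|/2 - Real.sqrt ((1 + min α β) * (1 - max α β)))) := by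
  refine ⟨⟨optimalCoupling α β, posSemidef_optimalCoupling hα₁ hα₂ hβ₁ hβ₂,
    trace_optimalCoupling α β, ptrace1_optimalCoupling α β, ptrace2_optimalCoupling α β,
    trace_Csymm_mul_optimalCoupling α β p⟩, ?_⟩
  rintro x ⟨P, hP, -, h₁, h₂, hx⟩
  have hcost := optimalCost_le_re_trace p hP h₁ h₂
  rwa [hx, Complex.ofReal_re] at hcost

/-- the optimal symmetric transport cost between the commuting qubit
states `ρ(α)` and `ρ(β)` equals `2^p (1 + |α−β|/2 − √((1+min)(1−max)))`. -/
theorem stmt_4 (p : ℝ) (hp : 1 ≤ p) (α β : ℝ) (hα₁ : -1 ≤ α) (hα₂ : α ≤ 1)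
    (hβ₁ : -1 ≤ β) (hβ₂ : β ≤ 1) :
    IsLeast {x : ℝ | ∃ P : Matrix (Fin 4) (Fin 4) ℂ, P.PosSemidef ∧ P.trace = 1 ∧
        ptrace1 P = !![(((1 + α)/2 : ℝ) : ℂ), 0; 0, (((1 - α)/2 : ℝ) : ℂ)] ∧
        ptrace2 P = !![(((1 + β)/2 : ℝ) : ℂ), 0; 0, (((1 - β)/2 : ℝ) : ℂ)] ∧
        (Csymm p * P).trace = (x : ℂ)}
      ((2:ℝ)^p * (1 + |α - β|/2 - Real.sqrt ((1 + min α β) * (1 - max α β)))) :=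
  stmt_4_general p α β hα₁ hα₂ hβ₁ hβ₂
end
end

section
/- For −1 ≤ α, β ≤ 1 with |α| ≥ |β| and α ≠ 0, the 4×4 matrix Π₊(α,β) = (1/4)·[[1+t, α, β, (1+t)β/α],[α, 1−t, (1−t)β/α, β],[β, (1−t)β/α, 1−t, α],[(1+t)β/α, β, α, 1+t]] with t = √(1−α²) is positive semidefinite, has trace 1, and its partial trace over the second tensor factor equals (1/2)[[1,β],[β,1]] while its partial trace over the first factor equals (1/2)[[1,α],[α,1]]. -/
/-!
`Π₊(α,β)` has rank two: with `x = (1+t, α, β, (1+t)β/α)` and `y = (0, 0, α, 1+t)`,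
`4(1+t) Π₊ = x xᵀ + (1 - β²/α²) y yᵀ`, an identity that only uses `α² = (1+t)(1-t)`.
Both weights are nonnegative since `t ≥ 0` and `|β| ≤ |α|`, so `Π₊` is positive semidefinite.
Trace and partial traces are read off the entries, where `t` cancels.
-/

open Matrix
open scoped ComplexOrder

noncomputable section

def piPlus (α β t : ℝ) : Matrix (Fin 4) (Fin 4) ℂ :=
  (1/4 : ℂ) •
    !![((1 + t : ℝ) : ℂ), (α : ℂ), (β : ℂ), (((1 + t) * β / α : ℝ) : ℂ);
       (α : ℂ), ((1 - t : ℝ) : ℂ), (((1 - t) * β / α : ℝ) : ℂ), (β : ℂ);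
       (β : ℂ), (((1 - t) * β / α : ℝ) : ℂ), ((1 - t : ℝ) : ℂ), (α : ℂ);
       (((1 + t) * β / α : ℝ) : ℂ), (β : ℂ), (α : ℂ), ((1 + t : ℝ) : ℂ)]

theorem trace_piPlus (α β t : ℝ) : (piPlus α β t).trace = 1 := by
  simp [piPlus, trace, Fin.sum_univ_four]
  ring

theorem ptrace2_piPlus (α β t : ℝ) :
    ptrace2 (piPlus α β t) = (1/2 : ℂ) • !![1, (β : ℂ); (β : ℂ), 1] := by
  ext i j
  fin_cases i <;> fin_cases j <;> simp [ptrace2, piPlus] <;> ring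

theorem ptrace1_piPlus (α β t : ℝ) :
    ptrace1 (piPlus α β t) = (1/2 : ℂ) • !![1, (α : ℂ); (α : ℂ), 1] := by
  ext i j
  fin_cases i <;> fin_cases j <;> simp [ptrace1, piPlus] <;> ring

theorem piPlus_eq_smul_vecMulVec_add {α β t : ℝ} (hα : α ≠ 0) (ht : t ^ 2 = 1 - α ^ 2)
    (h1t : 1 + t ≠ 0) :
    let x : Fin 4 → ℂ := ![((1 + t : ℝ) : ℂ), α, β, (((1 + t) * β / α : ℝ) : ℂ)]
    let y : Fin 4 → ℂ := ![0, 0, α, ((1 + t : ℝ) : ℂ)]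
    piPlus α β t = ((4 * (1 + t))⁻¹ : ℝ) •
      (vecMulVec x (star x) + (1 - (β / α) ^ 2 : ℝ) • vecMulVec y (star y)) := by
  intro x y
  have h1tC : (1 + t : ℂ) ≠ 0 := by exact_mod_cast h1t
  have hαC : (α : ℂ) ≠ 0 := by exact_mod_cast hα
  have htC : (α : ℂ) ^ 2 = 1 - t ^ 2 := by
    linear_combination (by exact_mod_cast ht : (t : ℂ) ^ 2 = 1 - α ^ 2)
  ext i j
  fin_cases i <;> fin_cases j <;>
    simp only [Matrix.add_apply, Matrix.smul_apply, vecMulVec_apply, Pi.star_apply] <;>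
    simp [piPlus, x, y, Complex.conj_ofReal] <;> field_simp <;>
    first | ring1 | linear_combination -htC | linear_combination -(β : ℂ) * htC

theorem posSemidef_piPlus {α β t : ℝ} (hα : α ≠ 0) (hβα : |β| ≤ |α|) (ht : t ^ 2 = 1 - α ^ 2)
    (ht0 : 0 ≤ t) : (piPlus α β t).PosSemidef := by
  have hweight : 0 ≤ 1 - (β / α) ^ 2 := by
    rw [sub_nonneg, sq_le_one_iff_abs_le_one, abs_div]
    exact div_le_one_of_le₀ hβα (abs_nonneg α)
  rw [piPlus_eq_smul_vecMulVec_add hα ht (by positivity)]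
  exact ((posSemidef_vecMulVec_self_star _).add
    ((posSemidef_vecMulVec_self_star _).smul hweight)).smul (by positivity)

theorem stmt_8_general (α β : ℝ) (hα₁ : -1 ≤ α) (hα₂ : α ≤ 1)
    (hαβ : |β| ≤ |α|) (hα0 : α ≠ 0)
    (t : ℝ) (ht : t = Real.sqrt (1 - α^2))
    (P : Matrix (Fin 4) (Fin 4) ℂ)
    (hP : P = (1/4 : ℂ) •
      !![((1 + t : ℝ) : ℂ), (α : ℂ), (β : ℂ), (((1 + t) * β / α : ℝ) : ℂ);
         (α : ℂ), ((1 - t : ℝ) : ℂ), (((1 - t) * β / α : ℝ) : ℂ), (β : ℂ);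
         (β : ℂ), (((1 - t) * β / α : ℝ) : ℂ), ((1 - t : ℝ) : ℂ), (α : ℂ);
         (((1 + t) * β / α : ℝ) : ℂ), (β : ℂ), (α : ℂ), ((1 + t : ℝ) : ℂ)]) :
    P.PosSemidef ∧ P.trace = 1 ∧
    ptrace2 P = (1/2 : ℂ) • !![1, (β : ℂ); (β : ℂ), 1] ∧
    ptrace1 P = (1/2 : ℂ) • !![1, (α : ℂ); (α : ℂ), 1] := by
  have hα_sq : α ^ 2 ≤ 1 := (sq_le_one_iff_abs_le_one α).2 (abs_le.2 ⟨hα₁, hα₂⟩)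
  have ht_sq : t ^ 2 = 1 - α ^ 2 := by rw [ht, Real.sq_sqrt (by linarith)]
  have ht0 : 0 ≤ t := ht ▸ Real.sqrt_nonneg _
  change P = piPlus α β t at hP
  subst hP
  exact ⟨posSemidef_piPlus hα0 hαβ ht_sq ht0, trace_piPlus α β t,
    ptrace2_piPlus α β t, ptrace1_piPlus α β t⟩

/-- the explicit matrix `Π₊(α,β)` (with `t = √(1−α²)`) is a coupling of
`ρ(α) = (1/2)(I + ασ_x)` and `ρ(β)`, provided `|α| ≥ |β|` and `α ≠ 0`. -/
theorem stmt_8 (α β : ℝ) (hα₁ : -1 ≤ α) (hα₂ : α ≤ 1) (hβ₁ : -1 ≤ β) (hβ₂ : β ≤ 1)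
    (hαβ : |β| ≤ |α|) (hα0 : α ≠ 0)
    (t : ℝ) (ht : t = Real.sqrt (1 - α^2))
    (P : Matrix (Fin 4) (Fin 4) ℂ)
    (hP : P = (1/4 : ℂ) •
      !![((1 + t : ℝ) : ℂ), (α : ℂ), (β : ℂ), (((1 + t) * β / α : ℝ) : ℂ);
         (α : ℂ), ((1 - t : ℝ) : ℂ), (((1 - t) * β / α : ℝ) : ℂ), (β : ℂ);
         (β : ℂ), (((1 - t) * β / α : ℝ) : ℂ), ((1 - t : ℝ) : ℂ), (α : ℂ);
         (((1 + t) * β / α : ℝ) : ℂ), (β : ℂ), (α : ℂ), ((1 + t : ℝ) : ℂ)]) :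
    P.PosSemidef ∧ P.trace = 1 ∧
    ptrace2 P = (1/2 : ℂ) • !![1, (β : ℂ); (β : ℂ), 1] ∧
    ptrace1 P = (1/2 : ℂ) • !![1, (α : ℂ); (α : ℂ), 1] :=
  stmt_8_general α β hα₁ hα₂ hαβ hα0 t ht P hP
end
end

section
/- Let p ≥ 1, 0 ≤ M < 1, and set X± = 2^{p−1}·[[1 − 1/√(1−M²), ±√(M²/(1−M²))],[±√(M²/(1−M²)), 1 − 1/√(1−M²)]] and Y = 0. Then both C_{z,p} − Y⊗I₂ − I₂⊗X±ᵀ and C_{z,p} − X±⊗I₂ − I₂⊗Yᵀ are positive semidefinite, where C_{z,p} = diag(0, 2^p, 2^p, 0) ∈ M₄(ℂ). -/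
open Matrix
open scoped ComplexOrder

noncomputable section

/-! With `q = 2^{p-1}`, `c = 1/√(1-M²)` and `r = √(M²/(1-M²))` we have `c ≥ 1` and `c² - r² = 1`.
For `Y = 0` the first constraint matrix is block diagonal with blocks `q [[c-1, -sr], [-sr, c+1]]`
and `q [[c+1, -sr], [-sr, c-1]]`, whose determinants `q² (c² - 1 - s²r²)` vanish: each block is
the Gram matrix of one vector built from `u = √(q(c-1))` and `v = √(q(c+1))` (note `uv = qr`),
so the matrix is a sum of two rank-one positive semidefinite matrices. The second constraint
matrix is the first one conjugated by the permutation exchanging the tensor factors, which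
fixes `C_{z,p}`. -/

/-- The paper's `X±` is `potential (2 ^ (p - 1)) (1 / √(1 - M²)) √(M² / (1 - M²)) (±1)`. -/
def potential (q c r s : ℝ) : Matrix (Fin 2) (Fin 2) ℂ :=
  (q : ℂ) • !![((1 - c : ℝ) : ℂ), ((s * r : ℝ) : ℂ); ((s * r : ℝ) : ℂ), ((1 - c : ℝ) : ℂ)]

lemma potential_transpose (q c r s : ℝ) : (potential q c r s)ᵀ = potential q c r s := by
  ext i j; fin_cases i <;> fin_cases j <;> rfl

lemma kron_zero_left (B : Matrix (Fin 2) (Fin 2) ℂ) : kron 0 B = 0 := by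
  ext i j; fin_cases i <;> fin_cases j <;> simp [kron]

lemma kron_zero_right (A : Matrix (Fin 2) (Fin 2) ℂ) : kron A 0 = 0 := by
  ext i j; fin_cases i <;> fin_cases j <;> simp [kron]

lemma kron_submatrix_swap (A B : Matrix (Fin 2) (Fin 2) ℂ) :
    (kron A B).submatrix (Equiv.swap 1 2) (Equiv.swap 1 2) = kron B A := by
  ext i j; fin_cases i <;> fin_cases j <;> simp [kron, Equiv.swap_apply_def, mul_comm]

lemma Cz_submatrix_swap (p : ℝ) : (Cz p).submatrix (Equiv.swap 1 2) (Equiv.swap 1 2) = Cz p := by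
  ext i j; fin_cases i <;> fin_cases j <;> simp [Cz, Equiv.swap_apply_def]

lemma posSemidef_Cz_sub_kron_comm (p : ℝ) (A : Matrix (Fin 2) (Fin 2) ℂ) :
    (Cz p - kron A 1).PosSemidef ↔ (Cz p - kron 1 A).PosSemidef := by
  rw [← posSemidef_submatrix_equiv (Equiv.swap 1 2)]
  simp only [submatrix_sub, Pi.sub_apply, Cz_submatrix_swap, kron_submatrix_swap]

lemma Cz_sub_kron_one_potential_eq {p q c r s u v : ℝ} (hq : (2 : ℝ) ^ p = 2 * q)
    (hu : u ^ 2 = q * (c - 1)) (hv : v ^ 2 = q * (c + 1)) (huv : u * v = q * r) (hs : s ^ 2 = 1) :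
    Cz p - kron 1 (potential q c r s) =
      vecMulVec (star ![(u : ℂ), -s * v, 0, 0]) ![(u : ℂ), -s * v, 0, 0] +
      vecMulVec (star ![0, 0, (v : ℂ), -s * u]) ![0, 0, (v : ℂ), -s * u] := by
  have hu' : (u : ℂ) ^ 2 = q * (c - 1) := by exact_mod_cast hu
  have hv' : (v : ℂ) ^ 2 = q * (c + 1) := by exact_mod_cast hv
  have huv' : (u : ℂ) * v = q * r := by exact_mod_cast huv
  have hs' : (s : ℂ) ^ 2 = 1 := by exact_mod_cast hs
  ext i j
  fin_cases i <;> fin_cases j <;> simp [Cz, kron, potential, Complex.conj_ofReal, hq] <;> grind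

lemma posSemidef_Cz_sub_kron_one_potential {p c r s : ℝ} (hc : 1 ≤ c) (hr : 0 ≤ r)
    (hcr : c ^ 2 - r ^ 2 = 1) (hs : s ^ 2 = 1) :
    (Cz p - kron 1 (potential (2 ^ (p - 1)) c r s)).PosSemidef := by
  have hq : (2 : ℝ) ^ p = 2 * 2 ^ (p - 1) := by
    rw [Real.rpow_sub_one two_ne_zero]; ring
  set q : ℝ := 2 ^ (p - 1)
  have hq0 : 0 < q := by positivity
  have hu := Real.sq_sqrt (by nlinarith : 0 ≤ q * (c - 1))
  have hv := Real.sq_sqrt (by nlinarith : 0 ≤ q * (c + 1))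
  have huv : √(q * (c - 1)) * √(q * (c + 1)) = q * r := by
    rw [← Real.sqrt_mul (by nlinarith), ← Real.sqrt_sq (by positivity : 0 ≤ q * r)]
    congr 1
    linear_combination q ^ 2 * hcr
  rw [Cz_sub_kron_one_potential_eq hq hu hv huv hs]
  exact (posSemidef_vecMulVec_star_self _).add (posSemidef_vecMulVec_star_self _)

lemma one_le_one_div_sqrt_one_sub_sq {M : ℝ} (hM : M ^ 2 < 1) : 1 ≤ 1 / √(1 - M ^ 2) := by
  rw [le_one_div one_pos (by simpa using hM), div_one]
  exact Real.sqrt_le_one.mpr (by nlinarith)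

lemma one_div_sqrt_one_sub_sq_sq_sub {M : ℝ} (hM : M ^ 2 < 1) :
    (1 / √(1 - M ^ 2)) ^ 2 - √(M ^ 2 / (1 - M ^ 2)) ^ 2 = 1 := by
  have h : 0 < 1 - M ^ 2 := by linarith
  rw [div_pow, Real.sq_sqrt h.le, Real.sq_sqrt (by positivity)]
  field_simp

theorem stmt_9_general (p : ℝ) (M : ℝ) (hM₁ : 0 ≤ M) (hM₂ : M < 1)
    (s : ℝ) (hs : s = 1 ∨ s = -1)
    (X : Matrix (Fin 2) (Fin 2) ℂ)
    (hX : X = (((2:ℝ)^(p-1) : ℝ) : ℂ) •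
      !![((1 - 1 / Real.sqrt (1 - M^2) : ℝ) : ℂ), ((s * Real.sqrt (M^2 / (1 - M^2)) : ℝ) : ℂ);
         ((s * Real.sqrt (M^2 / (1 - M^2)) : ℝ) : ℂ), ((1 - 1 / Real.sqrt (1 - M^2) : ℝ) : ℂ)])
    (Y : Matrix (Fin 2) (Fin 2) ℂ) (hY : Y = 0) :
    (Cz p - kron Y 1 - kron 1 Xᵀ).PosSemidef ∧
    (Cz p - kron X 1 - kron 1 Yᵀ).PosSemidef := by
  obtain rfl : X = potential (2 ^ (p - 1)) (1 / √(1 - M ^ 2)) √(M ^ 2 / (1 - M ^ 2)) s := hX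
  subst hY
  have hM : M ^ 2 < 1 := by nlinarith
  have hs2 : s ^ 2 = 1 := by rcases hs with rfl | rfl <;> norm_num
  have key := posSemidef_Cz_sub_kron_one_potential (p := p)
    (one_le_one_div_sqrt_one_sub_sq hM) (Real.sqrt_nonneg _)
    (one_div_sqrt_one_sub_sq_sq_sub hM) hs2
  constructor
  · rw [kron_zero_left, sub_zero, potential_transpose]
    exact key
  · rw [transpose_zero, kron_zero_right, sub_zero, posSemidef_Cz_sub_kron_comm]
    exact key

/-- the Kantorovich potentials `X± , Y = 0` satisfy both dual constraints
for the cost `C_{z,p} = diag(0,2^p,2^p,0)`. -/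
theorem stmt_9 (p : ℝ) (hp : 1 ≤ p) (M : ℝ) (hM₁ : 0 ≤ M) (hM₂ : M < 1)
    (s : ℝ) (hs : s = 1 ∨ s = -1)
    (X : Matrix (Fin 2) (Fin 2) ℂ)
    (hX : X = (((2:ℝ)^(p-1) : ℝ) : ℂ) •
      !![((1 - 1 / Real.sqrt (1 - M^2) : ℝ) : ℂ), ((s * Real.sqrt (M^2 / (1 - M^2)) : ℝ) : ℂ);
         ((s * Real.sqrt (M^2 / (1 - M^2)) : ℝ) : ℂ), ((1 - 1 / Real.sqrt (1 - M^2) : ℝ) : ℂ)])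
    (Y : Matrix (Fin 2) (Fin 2) ℂ) (hY : Y = 0) :
    (Cz p - kron Y 1 - kron 1 Xᵀ).PosSemidef ∧
    (Cz p - kron X 1 - kron 1 Yᵀ).PosSemidef :=
  stmt_9_general p M hM₁ hM₂ s hs X hX Y hY
end
end

section
/- For p ≥ 1 and −1 ≤ α, β ≤ 1, the minimum of tr(C_{z,p} Π) over all positive semidefinite Π ∈ M₄(ℂ) with trace 1, partial trace over the second factor equal to diag((1+β)/2,(1−β)/2), and partial trace over the first factor equal to diag((1+α)/2,(1−α)/2), equals 2^{p−1}|α−β|, where C_{z,p} = diag(0, 2^p, 2^p, 0). -/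
/-!
The cost `tr(C_{z,p} P) = 2^p (P₁₁ + P₂₂)` only sees the two diagonal entries of a coupling that
move mass between the eigenstates of `σ_z`. Comparing the two marginal constraints on `P₀₀` gives
`P₁₁ - P₂₂ = (β - α)/2`, so positivity of the diagonal forces a cost of at least
`2^p |α - β| / 2`; the diagonal coupling that uses only one of `P₁₁`, `P₂₂` attains it.
-/

open Matrix
open scoped ComplexOrder

noncomputable section

/-- The diagonal of the coupling `Π(α, β)`: only the mass `|α - β| / 2` changes its
`σ_z`-eigenvalue, and it does so in one direction only. -/
def couplingWeights (α β : ℝ) : Fin 4 → ℝ :=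
  ![(1 + min α β) / 2, max (β - α) 0 / 2, max (α - β) 0 / 2, (1 - max α β) / 2]

lemma couplingWeights_nonneg {α β : ℝ} (hα₁ : -1 ≤ α) (hα₂ : α ≤ 1) (hβ₁ : -1 ≤ β)
    (hβ₂ : β ≤ 1) (i : Fin 4) : 0 ≤ couplingWeights α β i := by
  fin_cases i <;> simp [couplingWeights] <;> grind

section Marginals

variable (α β : ℝ)

lemma couplingWeights_zero_add_one :
    couplingWeights α β 0 + couplingWeights α β 1 = (1 + β) / 2 := by
  simp [couplingWeights]; grind

lemma couplingWeights_two_add_three :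
    couplingWeights α β 2 + couplingWeights α β 3 = (1 - β) / 2 := by
  simp [couplingWeights]; grind

lemma couplingWeights_zero_add_two :
    couplingWeights α β 0 + couplingWeights α β 2 = (1 + α) / 2 := by
  simp [couplingWeights]; grind

lemma couplingWeights_one_add_three :
    couplingWeights α β 1 + couplingWeights α β 3 = (1 - α) / 2 := by
  simp [couplingWeights]; grind

lemma couplingWeights_one_add_two :
    couplingWeights α β 1 + couplingWeights α β 2 = |α - β| / 2 := by
  simp [couplingWeights]; grind

end Marginals

def diagCoupling (α β : ℝ) : Matrix (Fin 4) (Fin 4) ℂ :=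
  diagonal fun i => (couplingWeights α β i : ℂ)

lemma diagCoupling_posSemidef {α β : ℝ} (hα₁ : -1 ≤ α) (hα₂ : α ≤ 1) (hβ₁ : -1 ≤ β)
    (hβ₂ : β ≤ 1) : (diagCoupling α β).PosSemidef :=
  PosSemidef.diagonal fun i =>
    Complex.zero_le_real.2 (couplingWeights_nonneg hα₁ hα₂ hβ₁ hβ₂ i)

lemma trace_diagCoupling (α β : ℝ) : (diagCoupling α β).trace = 1 := by
  simp only [diagCoupling, trace_diagonal, Fin.sum_univ_four]
  norm_cast
  linear_combination couplingWeights_zero_add_one α β + couplingWeights_two_add_three α β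

lemma ptrace2_diagCoupling (α β : ℝ) :
    ptrace2 (diagCoupling α β) = !![(((1 + β) / 2 : ℝ) : ℂ), 0; 0, (((1 - β) / 2 : ℝ) : ℂ)] := by
  simp [ptrace2, diagCoupling, ← couplingWeights_zero_add_one α β,
    ← couplingWeights_two_add_three α β]

lemma ptrace1_diagCoupling (α β : ℝ) :
    ptrace1 (diagCoupling α β) = !![(((1 + α) / 2 : ℝ) : ℂ), 0; 0, (((1 - α) / 2 : ℝ) : ℂ)] := by
  simp [ptrace1, diagCoupling, ← couplingWeights_zero_add_two α β,
    ← couplingWeights_one_add_three α β]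

lemma trace_Cz_mul (p : ℝ) (P : Matrix (Fin 4) (Fin 4) ℂ) :
    (Cz p * P).trace = ((2 : ℝ) ^ p : ℝ) * (P 1 1 + P 2 2) := by
  simp only [trace, diag, mul_apply, Fin.sum_univ_four, Cz]
  simp
  ring

lemma trace_Cz_mul_diagCoupling (p α β : ℝ) :
    (Cz p * diagCoupling α β).trace = (((2 : ℝ) ^ (p - 1) * |α - β| : ℝ) : ℂ) := by
  rw [trace_Cz_mul, Real.rpow_sub_one two_ne_zero]
  simp only [diagCoupling, diagonal_apply_eq]
  rw [← Complex.ofReal_add, couplingWeights_one_add_two]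
  push_cast
  ring

lemma two_rpow_sub_one_mul_abs_sub_le {p α β x : ℝ} {P : Matrix (Fin 4) (Fin 4) ℂ}
    (hP : P.PosSemidef)
    (h2 : ptrace2 P = !![(((1 + β) / 2 : ℝ) : ℂ), 0; 0, (((1 - β) / 2 : ℝ) : ℂ)])
    (h1 : ptrace1 P = !![(((1 + α) / 2 : ℝ) : ℂ), 0; 0, (((1 - α) / 2 : ℝ) : ℂ)])
    (hx : (Cz p * P).trace = x) :
    2 ^ (p - 1) * |α - β| ≤ x := by
  have h11 := (Complex.nonneg_iff.1 (hP.diag_nonneg (i := 1))).1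
  have h22 := (Complex.nonneg_iff.1 (hP.diag_nonneg (i := 2))).1
  have e2 : (P 0 0).re + (P 1 1).re = (1 + β) / 2 := by
    simpa [ptrace2] using congrArg Complex.re (congrFun (congrFun h2 0) 0)
  have e1 : (P 0 0).re + (P 2 2).re = (1 + α) / 2 := by
    simpa [ptrace1] using congrArg Complex.re (congrFun (congrFun h1 0) 0)
  have hx' : x = 2 ^ p * ((P 1 1).re + (P 2 2).re) := by
    simpa [trace_Cz_mul] using (congrArg Complex.re hx).symm
  have habs : |α - β| / 2 ≤ (P 1 1).re + (P 2 2).re := by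
    rw [div_le_iff₀ two_pos, abs_le]
    constructor <;> linarith
  calc 2 ^ (p - 1) * |α - β| = 2 ^ p * (|α - β| / 2) := by
        rw [Real.rpow_sub_one two_ne_zero]; ring
    _ ≤ 2 ^ p * ((P 1 1).re + (P 2 2).re) := by gcongr
    _ = x := hx'.symm

theorem stmt_11_general (p : ℝ) (α β : ℝ) (hα₁ : -1 ≤ α) (hα₂ : α ≤ 1)
    (hβ₁ : -1 ≤ β) (hβ₂ : β ≤ 1) :
    IsLeast {x : ℝ | ∃ P : Matrix (Fin 4) (Fin 4) ℂ, P.PosSemidef ∧ P.trace = 1 ∧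
        ptrace2 P = !![(((1 + β)/2 : ℝ) : ℂ), 0; 0, (((1 - β)/2 : ℝ) : ℂ)] ∧
        ptrace1 P = !![(((1 + α)/2 : ℝ) : ℂ), 0; 0, (((1 - α)/2 : ℝ) : ℂ)] ∧
        (Cz p * P).trace = (x : ℂ)}
      ((2:ℝ)^(p-1) * |α - β|) :=
  ⟨⟨diagCoupling α β, diagCoupling_posSemidef hα₁ hα₂ hβ₁ hβ₂, trace_diagCoupling α β,
      ptrace2_diagCoupling α β, ptrace1_diagCoupling α β, trace_Cz_mul_diagCoupling p α β⟩,
    fun _ ⟨_, hP, _, h2, h1, hx⟩ => two_rpow_sub_one_mul_abs_sub_le hP h2 h1 hx⟩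

/-- the optimal transport cost for `C_{z,p}` between the commuting states
`ρ(α) = diag((1+α)/2,(1−α)/2)` and `ρ(β)` equals `2^{p−1}|α−β|`. -/
theorem stmt_11 (p : ℝ) (hp : 1 ≤ p) (α β : ℝ) (hα₁ : -1 ≤ α) (hα₂ : α ≤ 1)
    (hβ₁ : -1 ≤ β) (hβ₂ : β ≤ 1) :
    IsLeast {x : ℝ | ∃ P : Matrix (Fin 4) (Fin 4) ℂ, P.PosSemidef ∧ P.trace = 1 ∧
        ptrace2 P = !![(((1 + β)/2 : ℝ) : ℂ), 0; 0, (((1 - β)/2 : ℝ) : ℂ)] ∧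
        ptrace1 P = !![(((1 + α)/2 : ℝ) : ℂ), 0; 0, (((1 - α)/2 : ℝ) : ℂ)] ∧
        (Cz p * P).trace = (x : ℂ)}
      ((2:ℝ)^(p-1) * |α - β|) :=
  stmt_11_general p α β hα₁ hα₂ hβ₁ hβ₂
end
end

section
/- For all real a, b, c ∈ [−1, 1], define f(x,y) = |x−y| + √(1−x²) + √(1−y²) − 2√((1+min(x,y))(1−max(x,y))). Then f(a,b) + f(b,c) ≥ f(a,c). (Triangle inequality for the squared symmetric quadratic Wasserstein divergence on commuting qubits.) -/
noncomputable section

private lemma qb_sqrt_mul (x y : ℝ) (hx : -1 ≤ x) :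
    Real.sqrt ((1 + x) * (1 - y)) = Real.sqrt (1 + x) * Real.sqrt (1 - y) :=
  Real.sqrt_mul (by linarith) _

private lemma qb_sqrt_sq (x : ℝ) (hx : -1 ≤ x) :
    Real.sqrt (1 - x ^ 2) = Real.sqrt (1 + x) * Real.sqrt (1 - x) := by
  rw [show (1 : ℝ) - x ^ 2 = (1 + x) * (1 - x) by ring, qb_sqrt_mul x x hx]

private lemma qb_main (a b c : ℝ) (ha₁ : -1 ≤ a) (ha₂ : a ≤ 1) (hb₁ : -1 ≤ b) (hb₂ : b ≤ 1)
    (hc₁ : -1 ≤ c) (hc₂ : c ≤ 1) (hac : a ≤ c) :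
    |a - c| + Real.sqrt (1 - a^2) + Real.sqrt (1 - c^2)
      - 2 * Real.sqrt ((1 + min a c) * (1 - max a c)) ≤
    (|a - b| + Real.sqrt (1 - a^2) + Real.sqrt (1 - b^2)
      - 2 * Real.sqrt ((1 + min a b) * (1 - max a b))) +
    (|b - c| + Real.sqrt (1 - b^2) + Real.sqrt (1 - c^2)
      - 2 * Real.sqrt ((1 + min b c) * (1 - max b c))) := by
  set P := Real.sqrt (1 + a) with hP
  set Q := Real.sqrt (1 - a) with hQ
  set R := Real.sqrt (1 + b) with hR
  set S := Real.sqrt (1 - b) with hS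
  set T := Real.sqrt (1 + c) with hT
  set U := Real.sqrt (1 - c) with hU
  have hP2 : P ^ 2 = 1 + a := Real.sq_sqrt (by linarith)
  have hQ2 : Q ^ 2 = 1 - a := Real.sq_sqrt (by linarith)
  have hR2 : R ^ 2 = 1 + b := Real.sq_sqrt (by linarith)
  have hS2 : S ^ 2 = 1 - b := Real.sq_sqrt (by linarith)
  have hT2 : T ^ 2 = 1 + c := Real.sq_sqrt (by linarith)
  have hU2 : U ^ 2 = 1 - c := Real.sq_sqrt (by linarith)
  have hP0 : 0 ≤ P := Real.sqrt_nonneg _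
  have hQ0 : 0 ≤ Q := Real.sqrt_nonneg _
  have hR0 : 0 ≤ R := Real.sqrt_nonneg _
  have hS0 : 0 ≤ S := Real.sqrt_nonneg _
  have hT0 : 0 ≤ T := Real.sqrt_nonneg _
  have hU0 : 0 ≤ U := Real.sqrt_nonneg _
  rw [qb_sqrt_sq a ha₁, qb_sqrt_sq b hb₁, qb_sqrt_sq c hc₁]
  rw [min_eq_left hac, max_eq_right hac, abs_of_nonpos (by linarith : a - c ≤ 0)]
  rcases le_total b a with hba | hab
  · -- b ≤ a ≤ c
    rw [min_eq_right hba, max_eq_left hba, min_eq_left (hba.trans hac),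
      max_eq_right (hba.trans hac), abs_of_nonneg (by linarith : 0 ≤ a - b),
      abs_of_nonpos (by linarith : b - c ≤ 0)]
    rw [qb_sqrt_mul a c ha₁, qb_sqrt_mul b a hb₁, qb_sqrt_mul b c hb₁]
    -- 0 ≤ (a−b) + R(S−Q) + U(P−R) ; a−b = S²−Q²
    have hSQ : Q ≤ S := Real.sqrt_le_sqrt (by linarith)
    have hPR : R ≤ P := Real.sqrt_le_sqrt (by linarith)
    nlinarith [mul_nonneg (by linarith : (0:ℝ) ≤ S - Q) (by linarith : (0:ℝ) ≤ S + Q + R),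
      mul_nonneg hU0 (by linarith : (0:ℝ) ≤ P - R)]
  rcases le_total b c with hbc | hcb
  · -- a ≤ b ≤ c
    rw [min_eq_left hab, max_eq_right hab, min_eq_left hbc, max_eq_right hbc,
      abs_of_nonpos (by linarith : a - b ≤ 0), abs_of_nonpos (by linarith : b - c ≤ 0)]
    rw [qb_sqrt_mul a c ha₁, qb_sqrt_mul a b ha₁, qb_sqrt_mul b c hb₁]
    -- 0 ≤ (R−P)(S−U)
    have hPR : P ≤ R := Real.sqrt_le_sqrt (by linarith)
    have hUS : U ≤ S := Real.sqrt_le_sqrt (by linarith)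
    nlinarith [mul_nonneg (by linarith : (0:ℝ) ≤ R - P) (by linarith : (0:ℝ) ≤ S - U)]
  · -- a ≤ c ≤ b
    rw [min_eq_left hab, max_eq_right hab, min_eq_right hcb, max_eq_left hcb,
      abs_of_nonpos (by linarith : a - b ≤ 0), abs_of_nonneg (by linarith : 0 ≤ b - c)]
    rw [qb_sqrt_mul a c ha₁, qb_sqrt_mul a b ha₁, qb_sqrt_mul c b hc₁]
    -- 0 ≤ (b−c) + S(R−T) + P(U−S) ; b−c = R²−T²
    have hTR : T ≤ R := Real.sqrt_le_sqrt (by linarith)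
    have hSU : S ≤ U := Real.sqrt_le_sqrt (by linarith)
    nlinarith [mul_nonneg (by linarith : (0:ℝ) ≤ R - T) (by linarith : (0:ℝ) ≤ R + T + S),
      mul_nonneg hP0 (by linarith : (0:ℝ) ≤ U - S)]

/-- triangle inequality for the squared symmetric quadratic Wasserstein
divergence on commuting qubits. -/
theorem stmt_12 (a b c : ℝ) (ha₁ : -1 ≤ a) (ha₂ : a ≤ 1) (hb₁ : -1 ≤ b) (hb₂ : b ≤ 1)
    (hc₁ : -1 ≤ c) (hc₂ : c ≤ 1)
    (f : ℝ → ℝ → ℝ)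
    (hf : ∀ x y, f x y = |x - y| + Real.sqrt (1 - x^2) + Real.sqrt (1 - y^2)
      - 2 * Real.sqrt ((1 + min x y) * (1 - max x y))) :
    f a c ≤ f a b + f b c := by
  rw [hf, hf, hf]
  rcases le_total a c with hac | hca
  · exact qb_main a b c ha₁ ha₂ hb₁ hb₂ hc₁ hc₂ hac
  · have h := qb_main c b a hc₁ hc₂ hb₁ hb₂ ha₁ ha₂ hca
    rw [abs_sub_comm c a, min_comm c a, max_comm c a, abs_sub_comm c b, min_comm c b,
      max_comm c b, abs_sub_comm b a, min_comm b a, max_comm b a] at h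
    linarith
end
end

section
/- For Bloch parameters α, β ∈ [−1,1], define d²(α,β) = 2(|α−β| + √(1−α²) + √(1−β²) − 2√((1+min(α,β))(1−max(α,β)))). Then d²(α,β) ≥ 0, with equality if and only if α = β. -/
lemma stmt_16_aux (α β : ℝ) (hβ₁ : -1 ≤ β) (hα₂ : α ≤ 1) (hβα : β ≤ α) :
    0 ≤ (α - β) + Real.sqrt (1 - α^2) + Real.sqrt (1 - β^2)
      - 2 * Real.sqrt ((1 + β) * (1 - α)) ∧
    ((α - β) + Real.sqrt (1 - α^2) + Real.sqrt (1 - β^2)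
      - 2 * Real.sqrt ((1 + β) * (1 - α)) = 0 → α = β) := by
  have hα₁ : -1 ≤ α := le_trans hβ₁ hβα
  have hβ₂ : β ≤ 1 := le_trans hβα hα₂
  set a := Real.sqrt (1 + α) with ha
  set b := Real.sqrt (1 - α) with hb
  set c := Real.sqrt (1 + β) with hc
  set d := Real.sqrt (1 - β) with hd
  have ha2 : a ^ 2 = 1 + α := Real.sq_sqrt (by linarith)
  have hb2 : b ^ 2 = 1 - α := Real.sq_sqrt (by linarith)
  have hc2 : c ^ 2 = 1 + β := Real.sq_sqrt (by linarith)
  have ha0 : 0 ≤ a := Real.sqrt_nonneg _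
  have hb0 : 0 ≤ b := Real.sqrt_nonneg _
  have hc0 : 0 ≤ c := Real.sqrt_nonneg _
  have hd0 : 0 ≤ d := Real.sqrt_nonneg _
  have hac : c ≤ a := Real.sqrt_le_sqrt (by linarith)
  have hbd : b ≤ d := Real.sqrt_le_sqrt (by linarith)
  have e1 : Real.sqrt (1 - α^2) = a * b := by
    rw [show (1 : ℝ) - α^2 = (1 + α) * (1 - α) by ring, Real.sqrt_mul (by linarith)]
  have e2 : Real.sqrt (1 - β^2) = c * d := by
    rw [show (1 : ℝ) - β^2 = (1 + β) * (1 - β) by ring, Real.sqrt_mul (by linarith)]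
  have e3 : Real.sqrt ((1 + β) * (1 - α)) = c * b := by
    rw [Real.sqrt_mul (by linarith)]
  have hαβ : α - β = a ^ 2 - c ^ 2 := by rw [ha2, hc2]; ring
  have key : (α - β) + Real.sqrt (1 - α^2) + Real.sqrt (1 - β^2)
      - 2 * Real.sqrt ((1 + β) * (1 - α))
      = (a - c) * (a + b + c) + c * (d - b) := by
    rw [e1, e2, e3, hαβ]; ring
  have h1 : 0 ≤ (a - c) * (a + b + c) :=
    mul_nonneg (by linarith) (by linarith)
  have h2 : 0 ≤ c * (d - b) := mul_nonneg hc0 (by linarith)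
  constructor
  · rw [key]; linarith
  · intro h
    rw [key] at h
    have hz : (a - c) * (a + b + c) = 0 := by linarith
    rcases mul_eq_zero.mp hz with h' | h'
    · have : a = c := by linarith
      have : a ^ 2 = c ^ 2 := by rw [this]
      rw [ha2, hc2] at this; linarith
    · have hab : a = 0 ∧ b = 0 := ⟨by linarith, by linarith⟩
      exfalso
      have := ha2; have := hb2
      rw [hab.1] at ha2; rw [hab.2] at hb2
      nlinarith

/-- the squared symmetric quadratic Wasserstein divergence between
commuting qubits is nonnegative, and vanishes iff the states coincide. -/
theorem stmt_16 (α β : ℝ) (hα₁ : -1 ≤ α) (hα₂ : α ≤ 1) (hβ₁ : -1 ≤ β) (hβ₂ : β ≤ 1)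
    (d2 : ℝ)
    (hd2 : d2 = 2 * (|α - β| + Real.sqrt (1 - α^2) + Real.sqrt (1 - β^2)
      - 2 * Real.sqrt ((1 + min α β) * (1 - max α β)))) :
    0 ≤ d2 ∧ (d2 = 0 ↔ α = β) := by
  rcases le_total β α with hle | hle
  · obtain ⟨hE0, hEeq⟩ := stmt_16_aux α β hβ₁ hα₂ hle
    rw [abs_of_nonneg (by linarith), min_eq_right hle, max_eq_left hle] at hd2
    constructor
    · rw [hd2]; linarith
    · constructor
      · intro h; rw [hd2] at h; exact hEeq (by linarith)
      · intro h; subst h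
        rw [hd2, show (1+α)*(1-α) = 1-α^2 by ring]; ring
  · obtain ⟨hE0, hEeq⟩ := stmt_16_aux β α hα₁ hβ₂ hle
    rw [abs_of_nonpos (by linarith), min_eq_left hle, max_eq_right hle] at hd2
    constructor
    · rw [hd2]; linarith
    · constructor
      · intro h; rw [hd2] at h
        exact (hEeq (by linarith)).symm
      · intro h; subst h
        rw [hd2, show (1+α)*(1-α) = 1-α^2 by ring]; ring
end
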